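/- arXiv:1706.08905 — 2 statements merged into one kernel-verified Lean document; each statement's English description precedes it below -/
import Mathlib

section
/- Unique readability of functional terms: if the strings of the concatenated functional terms s(t) and s'(t') coincide, then s = s' and t = t'; in particular every functional term is either a single letter or is uniquely of the form s(t) for functional terms s (the function) and t (the argument). -/
/-- Symbols of the formal language. -/
inductive FSym (L : Type) : Type
  | letter : L → FSym L          -- a letter
  | prop : FSym L                -- property symbol
  | eq : FSym L                  -- equality sign
  | neq : FSym L                 -- inequality sign
  | exOpen : FSym L              -- opening existential bracket [
  | exClose : FSym L             -- closing existential bracket ]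
  | allOpen : FSym L             -- opening universal bracket ⟨
  | allClose : FSym L            -- closing universal bracket ⟩
  | funOpen : FSym L             -- opening functional bracket (
  | funClose : FSym L            -- closing functional bracket )
  deriving DecidableEq

/-- Functional terms: letters, or s(t) for functional terms s and t. -/
inductive FTerm (L : Type) : Type
  | letter : L → FTerm L
  | app : FTerm L → FTerm L → FTerm L
  deriving DecidableEq

/-- Flattening a functional term to its string of symbols. -/
def FTerm.flatten {L : Type} : FTerm L → List (FSym L)
  | .letter a => [FSym.letter a]
  | .app s t => s.flatten ++ FSym.funOpen :: (t.flatten ++ [FSym.funClose])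

/-- Is this symbol an opening functional bracket? -/
def FSym.isFOpen {L : Type} : FSym L → Bool
  | .funOpen => true
  | _ => false

/-- Is this symbol a closing functional bracket? -/
def FSym.isFClose {L : Type} : FSym L → Bool
  | .funClose => true
  | _ => false

/-- Is this symbol a letter? -/
def FSym.isLetter {L : Type} : FSym L → Bool
  | .letter _ => true
  | _ => false
section Aux
variable {L : Type}

def bal : List (FSym L) → ℤ
  | [] => 0
  | x :: l => (if x.isFOpen then 1 else if x.isFClose then -1 else 0) + bal l

lemma bal_append (l1 l2 : List (FSym L)) : bal (l1 ++ l2) = bal l1 + bal l2 := by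
  induction l1 with
  | nil => simp [bal]
  | cons x l ih => simp [bal, ih]; ring

lemma bal_flatten (t : FTerm L) : bal t.flatten = 0 := by
  induction t with
  | letter a => simp [FTerm.flatten, bal, FSym.isFOpen, FSym.isFClose]
  | app s t ihs iht =>
    simp [FTerm.flatten, bal, bal_append, ihs, iht, FSym.isFOpen, FSym.isFClose]

lemma bal_prefix (t : FTerm L) : ∀ p q : List (FSym L), t.flatten = p ++ q → 0 ≤ bal p := by
  induction t with
  | letter a =>
    intro p q h
    simp only [FTerm.flatten] at h
    rcases p with _ | ⟨x, p⟩
    · simp [bal]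
    · simp only [List.cons_append, List.cons.injEq] at h
      obtain ⟨hx, h2⟩ := h
      have hp : p = [] := by
        cases p with
        | nil => rfl
        | cons y p => simp at h2
      subst hp hx
      simp [bal, FSym.isFOpen, FSym.isFClose]
  | app s t ihs iht =>
    intro p q h
    simp only [FTerm.flatten] at h
    rcases List.append_eq_append_iff.mp h.symm with ⟨w, hw1, hw2⟩ | ⟨w, hw1, hw2⟩
    · -- s.flatten = p ++ w
      exact ihs p w hw1
    · -- p = s.flatten ++ w, funOpen :: (t.flatten ++ [funClose]) = w ++ q
      rcases w with _ | ⟨x, w'⟩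
      · rw [hw1]; simp [bal_flatten, bal]
      · simp only [List.cons_append, List.cons.injEq] at hw2
        obtain ⟨hx, hw2⟩ := hw2
        subst hx hw1
        rcases List.append_eq_append_iff.mp hw2 with ⟨u, hu1, hu2⟩ | ⟨u, hu1, hu2⟩
        · -- w' = t.flatten ++ u, [funClose] = u ++ q
          rcases u with _ | ⟨y, u'⟩
          · subst hu1
            simp [bal_append, bal_flatten, bal, FSym.isFOpen, FSym.isFClose]
          · simp only [List.cons_append, List.cons.injEq] at hu2
            obtain ⟨hy, hu2⟩ := hu2
            have hu' : u' = [] := by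
              cases u' with
              | nil => rfl
              | cons z u'' => simp at hu2
            subst hu' hy hu1
            simp [bal_append, bal_flatten, bal, FSym.isFOpen, FSym.isFClose]
        · -- t.flatten = w' ++ u
          have h3 := iht w' u hu1
          simp [bal_append, bal_flatten, bal, FSym.isFOpen, FSym.isFClose]
          omega

lemma bal_proper_prefix (t : FTerm L) : ∀ a b : List (FSym L),
    t.flatten ++ [FSym.funClose] = a ++ b → b ≠ [] → 0 ≤ bal a := by
  intro a b h hb
  rcases List.append_eq_append_iff.mp h with ⟨w, hw1, hw2⟩ | ⟨w, hw1, hw2⟩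
  · -- a = t.flatten ++ w, [funClose] = w ++ b
    rcases w with _ | ⟨x, w'⟩
    · rw [hw1]; simp [bal_flatten, bal]
    · simp only [List.cons_append, List.cons.injEq] at hw2
      obtain ⟨hx, hw2⟩ := hw2
      exact absurd (List.append_eq_nil_iff.mp hw2.symm).2 hb
  · exact bal_prefix t a w hw1

lemma unique_split (p q p' q' : List (FSym L))
    (h : p ++ FSym.funOpen :: q = p' ++ FSym.funOpen :: q')
    (hp : bal p = 0) (hp' : bal p' = 0)
    (hq : ∀ a b, q = a ++ b → b ≠ [] → 0 ≤ bal a)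
    (hq' : ∀ a b, q' = a ++ b → b ≠ [] → 0 ≤ bal a) :
    p = p' ∧ q = q' := by
  rcases List.append_eq_append_iff.mp h with ⟨w, hw1, hw2⟩ | ⟨w, hw1, hw2⟩
  · -- p' = p ++ w, funOpen :: q = w ++ funOpen :: q'
    rcases w with _ | ⟨x, w'⟩
    · simp_all
    · simp only [List.cons_append, List.cons.injEq] at hw2
      obtain ⟨hx, hw2⟩ := hw2
      exfalso
      subst hx
      have h1 : bal w' = -1 := by
        rw [hw1, bal_append] at hp'
        simp [bal, FSym.isFOpen, FSym.isFClose] at hp'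
        omega
      have h2 := hq w' (FSym.funOpen :: q') hw2 (by simp)
      omega
  · -- p = p' ++ w, funOpen :: q' = w ++ funOpen :: q
    rcases w with _ | ⟨x, w'⟩
    · simp_all
    · simp only [List.cons_append, List.cons.injEq] at hw2
      obtain ⟨hx, hw2⟩ := hw2
      exfalso
      subst hx
      have h1 : bal w' = -1 := by
        rw [hw1, bal_append] at hp
        simp [bal, FSym.isFOpen, FSym.isFClose] at hp
        omega
      have h2 := hq' w' (FSym.funOpen :: q) hw2 (by simp)
      omega

lemma flatten_inj : ∀ s t : FTerm L, s.flatten = t.flatten → s = t := by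
  intro s
  induction s with
  | letter a =>
    intro t h
    cases t with
    | letter b => simp_all [FTerm.flatten]
    | app t1 t2 =>
      exfalso
      have : FSym.funOpen (L := L) ∈ (FTerm.letter a).flatten := by
        rw [h]; simp [FTerm.flatten]
      simp [FTerm.flatten] at this
  | app s1 s2 ih1 ih2 =>
    intro t h
    cases t with
    | letter b =>
      exfalso
      have : FSym.funOpen (L := L) ∈ (FTerm.letter b).flatten := by
        rw [← h]; simp [FTerm.flatten]
      simp [FTerm.flatten] at this
    | app t1 t2 =>
      simp only [FTerm.flatten] at h
      obtain ⟨h1, h2⟩ := unique_split s1.flatten (s2.flatten ++ [FSym.funClose])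
        t1.flatten (t2.flatten ++ [FSym.funClose]) h
        (bal_flatten s1) (bal_flatten t1)
        (bal_proper_prefix s2) (bal_proper_prefix t2)
      have e1 := ih1 t1 h1
      have e2 := ih2 t2 (by simpa using h2)
      rw [e1, e2]

end Aux

theorem unique_readability_of_functional_terms (L : Type) :
    -- if the strings of s(t) and s'(t') coincide then s = s' and t = t'
    (∀ s t s' t' : FTerm L, (FTerm.app s t).flatten = (FTerm.app s' t').flatten →
      s = s' ∧ t = t') ∧
    -- the flattening map is injective
    Function.Injective (FTerm.flatten (L := L)) := by
  have inj : Function.Injective (FTerm.flatten (L := L)) := fun a b => flatten_inj a b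
  refine ⟨fun s t s' t' h => ?_, inj⟩
  have := inj h
  injection this with h1 h2
  exact ⟨h1, h2⟩
end

section
/- Decomposition of abbreviations: for an abbreviation of length at least two (flattened to a symbol string), if its last symbol is a letter then the final functional term of its concatenation is that single letter; otherwise the last symbol is a closing functional bracket, and the final functional term begins at the last letter in the string that is followed by equally many opening and closing functional brackets. -/
/-- Abbreviations: a single letter, or an abbreviation followed by a functional term. -/
inductive FAbbr (L : Type) : Type
  | letter : L → FAbbr L
  | concat : FAbbr L → FTerm L → FAbbr L
  deriving DecidableEq

/-- Flattening an abbreviation to its string of symbols. -/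
def FAbbr.flatten {L : Type} : FAbbr L → List (FSym L)
  | .letter a => [FSym.letter a]
  | .concat a t => a.flatten ++ t.flatten

/-- A string with equally many opening and closing functional brackets. -/
def fBalanced {L : Type} (l : List (FSym L)) : Prop :=
  l.countP (fun x => x.isFOpen) = l.countP (fun x => x.isFClose)

/-!
The flattening of a functional term starts with a letter and has equally many opening and
closing brackets, and so does what follows its first letter. Every later letter of a term lies
in the argument `u` of some subterm `s(u)`, whose closing bracket is unmatched in the rest of the
string: after such a letter there are strictly more closing than opening brackets. Hence the
first letter of the final term `t` of `a t` is the last letter followed by a balanced string.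
-/

namespace FSym

variable {L : Type}

@[simp] theorem isFOpen_letter (x : L) : (letter x).isFOpen = false := rfl
@[simp] theorem isFOpen_funOpen : (funOpen : FSym L).isFOpen = true := rfl
@[simp] theorem isFOpen_funClose : (funClose : FSym L).isFOpen = false := rfl
@[simp] theorem isFClose_letter (x : L) : (letter x).isFClose = false := rfl
@[simp] theorem isFClose_funOpen : (funOpen : FSym L).isFClose = false := rfl
@[simp] theorem isFClose_funClose : (funClose : FSym L).isFClose = true := rfl
@[simp] theorem isLetter_letter (x : L) : (letter x).isLetter = true := rfl
@[simp] theorem isLetter_funOpen : (funOpen : FSym L).isLetter = false := rfl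
@[simp] theorem isLetter_funClose : (funClose : FSym L).isLetter = false := rfl

end FSym

namespace FTerm

variable {L : Type}

theorem exists_flatten_eq_letter_cons (t : FTerm L) : ∃ x r, t.flatten = FSym.letter x :: r := by
  induction t with
  | letter a => exact ⟨a, [], rfl⟩
  | app s u ihs _ =>
    obtain ⟨x, r, h⟩ := ihs
    exact ⟨x, r ++ FSym.funOpen :: (u.flatten ++ [FSym.funClose]), by simp [flatten, h]⟩

theorem flatten_ne_nil (t : FTerm L) : t.flatten ≠ [] := by
  obtain ⟨x, r, h⟩ := exists_flatten_eq_letter_cons t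
  simp [h]

theorem eq_letter_of_getLast?_flatten {t : FTerm L} {x : L}
    (h : t.flatten.getLast? = some (FSym.letter x)) : t = letter x := by
  cases t with
  | letter y => simpa [flatten] using h
  | app s u => simp [flatten, List.getLast?_cons] at h

theorem getLast?_flatten_of_ne_letter {t : FTerm L}
    (h : ∀ x, t.flatten.getLast? ≠ some (FSym.letter x)) :
    t.flatten.getLast? = some FSym.funClose := by
  cases t with
  | letter y => exact absurd rfl (h y)
  | app s u => simp [flatten, List.getLast?_cons]

theorem fBalanced_flatten (t : FTerm L) : fBalanced t.flatten := by
  induction t with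
  | letter a => simp [flatten, fBalanced]
  | app s u ihs ihu =>
    simp [fBalanced, flatten, List.countP_cons] at *
    omega

theorem fBalanced_flatten_drop_one (t : FTerm L) : fBalanced (t.flatten.drop 1) := by
  obtain ⟨x, r, h⟩ := exists_flatten_eq_letter_cons t
  have hbal := fBalanced_flatten t
  simp_all [fBalanced]

theorem countP_isFOpen_lt_countP_isFClose_drop (t : FTerm L) {j : ℕ} (hj : 1 ≤ j)
    (hletter : t.flatten[j]?.any FSym.isLetter = true) :
    (t.flatten.drop (j + 1)).countP (fun c => c.isFOpen) <
      (t.flatten.drop (j + 1)).countP (fun c => c.isFClose) := by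
  induction t generalizing j with
  | letter a =>
    obtain _ | j := j
    · omega
    · simp [flatten] at hletter
  | app s u ihs ihu =>
    have hflat : (app s u).flatten = s.flatten ++ FSym.funOpen :: (u.flatten ++ [FSym.funClose]) :=
      rfl
    rw [hflat] at hletter ⊢
    rcases lt_or_ge j s.flatten.length with hjs | hjs
    · rw [List.getElem?_append_left hjs] at hletter
      have hs := ihs hj hletter
      have hu := fBalanced_flatten u
      rw [List.drop_append_of_le_length hjs]
      simp [fBalanced, List.countP_cons] at hu ⊢
      omega
    obtain ⟨i, rfl⟩ : ∃ i, j = s.flatten.length + i := ⟨j - s.flatten.length, by omega⟩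
    rw [List.getElem?_append_right hjs, Nat.add_sub_cancel_left] at hletter
    rw [Nat.add_assoc, List.drop_length_add_append]
    obtain _ | i := i
    · simp at hletter
    rw [List.getElem?_cons_succ] at hletter
    rw [Nat.add_assoc, List.drop_succ_cons]
    rcases lt_or_ge i u.flatten.length with hiu | hiu
    · rw [List.getElem?_append_left hiu] at hletter
      rw [List.drop_append_of_le_length hiu]
      obtain _ | i := i
      · have hu := fBalanced_flatten_drop_one u
        simp [fBalanced, List.countP_cons] at hu ⊢
        omega
      · have hu := ihu (Nat.le_add_left 1 i) hletter
        simp [List.countP_cons]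
        omega
    · rw [List.getElem?_append_right hiu, List.getElem?_singleton] at hletter
      split_ifs at hletter <;> simp at hletter

end FTerm

theorem abbreviation_decomposition (L : Type) (a : FAbbr L) (t : FTerm L) :
    -- if the last symbol is a letter, the final functional term is that single letter
    (∀ x : L, ((FAbbr.concat a t).flatten).getLast? = some (FSym.letter x) →
      t = FTerm.letter x) ∧
    -- otherwise the last symbol is a closing functional bracket, and the final
    -- functional term begins at the last letter of the string which is followed
    -- by equally many opening and closing functional brackets
    ((∀ x : L, ((FAbbr.concat a t).flatten).getLast? ≠ some (FSym.letter x)) →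
      ((FAbbr.concat a t).flatten).getLast? = some FSym.funClose ∧
      (((FAbbr.concat a t).flatten)[a.flatten.length]?.any
        (fun c => c.isLetter) = true ∧
        fBalanced (((FAbbr.concat a t).flatten).drop (a.flatten.length + 1)) ∧
        ∀ m : ℕ, a.flatten.length < m →
          ((FAbbr.concat a t).flatten)[m]?.any (fun c => c.isLetter) = true →
          ¬ fBalanced (((FAbbr.concat a t).flatten).drop (m + 1)))) := by
  have hflat : (FAbbr.concat a t).flatten = a.flatten ++ t.flatten := rfl
  simp only [hflat, List.getLast?_append_of_ne_nil _ t.flatten_ne_nil]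
  refine ⟨fun x => FTerm.eq_letter_of_getLast?_flatten,
    fun hlast => ⟨FTerm.getLast?_flatten_of_ne_letter hlast, ?_, ?_, ?_⟩⟩
  · obtain ⟨x, r, ht⟩ := t.exists_flatten_eq_letter_cons
    simp [ht]
  · rw [List.drop_length_add_append]
    exact t.fBalanced_flatten_drop_one
  · intro m hm hletter hbal
    obtain ⟨j, rfl⟩ : ∃ j, m = a.flatten.length + j := ⟨m - a.flatten.length, by omega⟩
    rw [List.getElem?_append_right (by omega), Nat.add_sub_cancel_left] at hletter
    rw [Nat.add_assoc, List.drop_length_add_append] at hbal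
    exact (t.countP_isFOpen_lt_countP_isFClose_drop (by omega) hletter).ne hbal
end
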